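/- For integers r ≥ 0, k ≥ 1 and n ≥ 1, the generalized hyperharmonic number admits the explicit formula h_n^{(r+1)}(k) = (1/r!) · Σ_{l=1}^{r+1} [r+1; l] · n^{l−1} · Σ_{i+j=k, i,j ≥ 0} (−1)^i · ζ_r^⋆({1}_i) · ζ_{n+r}({1}_j). -/

import Mathlib

open Finset

/-- Multiple harmonic number `ζ_n({1}_m)`:
`ζ_n({1}_m) = ∑_{n ≥ n₁ > n₂ > ⋯ > n_m ≥ 1} 1/(n₁ ⋯ n_m)`, with `ζ_n({1}_0) = 1`. -/
noncomputable def mhn : ℕ → ℕ → ℝ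
  | _, 0 => 1
  | n, m + 1 => ∑ k ∈ Finset.Icc 1 n, mhn (k - 1) m / (k : ℝ)

/-- Multiple harmonic star number `ζ_n^⋆({1}_m)`:
`ζ_n^⋆({1}_m) = ∑_{n ≥ n₁ ≥ n₂ ≥ ⋯ ≥ n_m ≥ 1} 1/(n₁ ⋯ n_m)`, with `ζ_n^⋆({1}_0) = 1`. -/
noncomputable def mhsn : ℕ → ℕ → ℝ
  | _, 0 => 1
  | n, m + 1 => ∑ k ∈ Finset.Icc 1 n, mhsn k m / (k : ℝ)

/-- Multiple harmonic number with repeated real argument `p`: `ζ_n({p}_m)`. -/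
noncomputable def mhnP (p : ℝ) : ℕ → ℕ → ℝ
  | _, 0 => 1
  | n, m + 1 => ∑ k ∈ Finset.Icc 1 n, mhnP p (k - 1) m / (k : ℝ) ^ p

/-- Multiple harmonic star number with repeated real argument `p`: `ζ_n^⋆({p}_m)`. -/
noncomputable def mhsnP (p : ℝ) : ℕ → ℕ → ℝ
  | _, 0 => 1
  | n, m + 1 => ∑ k ∈ Finset.Icc 1 n, mhsnP p k m / (k : ℝ) ^ p

/-- Generalized harmonic number `H_n^{(p)} = ∑_{j=1}^n 1/j^p`. -/
noncomputable def genH (p n : ℕ) : ℝ := ∑ j ∈ Finset.Icc 1 n, 1 / (j : ℝ) ^ p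

/-- Auxiliary: `hypAux m n k = h_n^{(m+1)}(k)` for `k ≥ 1` (peel off the weak outer indices). -/
noncomputable def hypAux : ℕ → ℕ → ℕ → ℝ
  | 0, n, k => mhn n k
  | m + 1, n, k => ∑ j ∈ Finset.Icc 1 n, hypAux m j k

/-- Generalized hyperharmonic number `h_n^{(m)}(k)`, with the convention
`h_n^{(m)}(0) = C(m+n-1, m-1)`. -/
noncomputable def gh (n m k : ℕ) : ℝ :=
  if k = 0 then (Nat.choose (m + n - 1) (m - 1) : ℝ) else hypAux (m - 1) n k

/-- Unsigned Stirling number of the first kind, defined by the standard recurrence,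
equivalently by `x(x+1)⋯(x+n-1) = ∑_{k=0}^n [n; k] xᵏ`. -/
def stir1 : ℕ → ℕ → ℕ
  | 0, 0 => 1
  | 0, _ + 1 => 0
  | _ + 1, 0 => 0
  | n + 1, k + 1 => stir1 n k + n * stir1 n (k + 1)

/-- Multiple zeta value `ζ(p, {1}_m)`. -/
noncomputable def mzv (p m : ℕ) : ℝ := ∑' n : ℕ, mhn n m / (n + 1 : ℝ) ^ p

/-- Multiple zeta star value `ζ^⋆(p, {1}_m)`. -/
noncomputable def mzvStar (p m : ℕ) : ℝ := ∑' n : ℕ, mhsn (n + 1) m / (n + 1 : ℝ) ^ p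

/-- Riemann zeta value `ζ(p) = ∑_{n=1}^∞ 1/n^p`. -/
noncomputable def rz (p : ℕ) : ℝ := ∑' n : ℕ, 1 / (n + 1 : ℝ) ^ p

/-- `U_{m,r}(p) = ∑_{n=1}^∞ ζ_{n+r}({1}_m)/n^p`. -/
noncomputable def Usum (m r p : ℕ) : ℝ := ∑' n : ℕ, mhn (n + 1 + r) m / (n + 1 : ℝ) ^ p

/-- Strictly decreasing `q`-fold sum `Ā_q(n) = ∑_{1 ≤ k_q < ⋯ < k₁ ≤ n} a_{k₁}⋯a_{k_q}`,
with `Ā_0(n) = 1` (so `Ā_q(n) = 0` when `n < q`). -/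
def sdSum {R : Type*} [Semiring R] (a : ℕ → R) : ℕ → ℕ → R
  | _, 0 => 1
  | n, q + 1 => ∑ k ∈ Finset.Icc 1 n, a k * sdSum a (k - 1) q

/-- Weakly decreasing `q`-fold sum `A_q(n) = ∑_{1 ≤ k_q ≤ ⋯ ≤ k₁ ≤ n} a_{k₁}⋯a_{k_q}`,
with `A_0(n) = 1`. -/
def wdSum {R : Type*} [Semiring R] (a : ℕ → R) : ℕ → ℕ → R
  | _, 0 => 1
  | n, q + 1 => ∑ k ∈ Finset.Icc 1 n, a k * wdSum a k q

/-!
Let `E_r(n, k)` (`shiftedMhn r n k`) be `ζ_n({1}_k)` with every denominator `n_i` replaced by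
`r + n_i`. Peeling off the weak outer summations one at a time, Pascal's rule and the absorption
identity give `h_n^{(r+1)}(k) = C(n+r, r) E_r(n, k)`. On generating functions,
`∑ᵢ (-1)^i ζ_r^⋆({1}_i) tⁱ = ∏_{j ≤ r} (1 + t/j)⁻¹` cancels the first `r` factors of
`∏_{j ≤ n+r} (1 + t/j) = ∑ⱼ ζ_{n+r}({1}_j) tʲ`, so the inner alternating sum is `E_r(n, k)`.
Finally `∑_l [r+1; l] n^l = n(n+1)⋯(n+r) = n · r! C(n+r, r)`.
-/

section sdSum

variable {R : Type*} [CommSemiring R] (a : ℕ → R)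

@[simp]
theorem sdSum_zero_right (n : ℕ) : sdSum a n 0 = 1 := rfl

@[simp]
theorem sdSum_zero_succ (q : ℕ) : sdSum a 0 (q + 1) = 0 := by
  simp [sdSum]

theorem sdSum_succ_succ (n q : ℕ) :
    sdSum a (n + 1) (q + 1) = sdSum a n (q + 1) + a (n + 1) * sdSum a n q := by
  rw [sdSum, sum_Icc_succ_top (by omega), add_tsub_cancel_right, sdSum]

theorem sdSum_succ_succ_eq_shift (n q : ℕ) :
    sdSum a (n + 1) (q + 1) =
      sdSum (fun j => a (j + 1)) n (q + 1) + a 1 * sdSum (fun j => a (j + 1)) n q := by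
  induction n generalizing q with
  | zero => cases q <;> simp [sdSum_succ_succ]
  | succ n ih =>
    rw [sdSum_succ_succ, ih, sdSum_succ_succ _ n]
    cases q with
    | zero => simp only [sdSum_zero_right]; ring
    | succ q => rw [ih, sdSum_succ_succ _ n]; ring

end sdSum

noncomputable def shiftedMhn (r : ℕ) : ℕ → ℕ → ℝ := sdSum fun j => ((r + j : ℕ) : ℝ)⁻¹

theorem mhn_eq_shiftedMhn_zero (n k : ℕ) : mhn n k = shiftedMhn 0 n k := by
  induction k generalizing n with
  | zero => rfl
  | succ k ih =>
    simp only [mhn, shiftedMhn, sdSum, ih, zero_add, div_eq_inv_mul]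

theorem shiftedMhn_succ_succ (r n k : ℕ) :
    shiftedMhn r (n + 1) (k + 1) =
      shiftedMhn r n (k + 1) + ((r + n + 1 : ℕ) : ℝ)⁻¹ * shiftedMhn r n k :=
  sdSum_succ_succ _ n k

theorem shiftedMhn_succ_succ_eq_shift (r n k : ℕ) :
    shiftedMhn r (n + 1) (k + 1) =
      shiftedMhn (r + 1) n (k + 1) + ((r + 1 : ℕ) : ℝ)⁻¹ * shiftedMhn (r + 1) n k := by
  have hshift : (fun j => ((r + (j + 1) : ℕ) : ℝ)⁻¹) = fun j => ((r + 1 + j : ℕ) : ℝ)⁻¹ := by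
    funext j; rw [← Nat.add_assoc, Nat.add_right_comm]
  rw [shiftedMhn, sdSum_succ_succ_eq_shift, hshift]; rfl

theorem hypAux_succ_eq_choose_mul_shiftedMhn (r n k : ℕ) :
    hypAux r n (k + 1) = (n + r).choose r * shiftedMhn r n (k + 1) := by
  induction r generalizing n with
  | zero => simp [hypAux, mhn_eq_shiftedMhn_zero]
  | succ r ih =>
    induction n with
    | zero => simp [hypAux, shiftedMhn]
    | succ n ihn =>
      have hpascal : ((n + (r + 1)).choose (r + 1) : ℝ) + (n + 1 + r).choose r =
          (n + 1 + (r + 1)).choose (r + 1) := by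
        rw [show n + 1 + (r + 1) = n + (r + 1) + 1 by omega, Nat.choose_succ_succ',
          show n + (r + 1) = n + 1 + r by omega]
        push_cast; ring
      have habsorb : ((n + 1 + r).choose r : ℝ) * ((r + 1 : ℕ) : ℝ)⁻¹ =
          (n + 1 + (r + 1)).choose (r + 1) * ((r + 1 + n + 1 : ℕ) : ℝ)⁻¹ := by
        have h := Nat.add_one_mul_choose_eq (n + 1 + r) r
        rw [show n + 1 + r + 1 = n + 1 + (r + 1) by omega] at h
        field_simp
        norm_cast
        linarith [h]
      rw [hypAux, sum_Icc_succ_top (by omega), ← hypAux, ihn, ih, shiftedMhn_succ_succ_eq_shift,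
        shiftedMhn_succ_succ]
      linear_combination shiftedMhn (r + 1) n (k + 1) * hpascal + shiftedMhn (r + 1) n k * habsorb

theorem mhsn_succ_succ (N m : ℕ) :
    mhsn (N + 1) (m + 1) = mhsn N (m + 1) + ((N + 1 : ℕ) : ℝ)⁻¹ * mhsn (N + 1) m := by
  rw [mhsn, sum_Icc_succ_top (by omega), mhsn, div_eq_inv_mul]

noncomputable def alternatingMhsnConv (r N k : ℕ) : ℝ :=
  ∑ i ∈ range (k + 1), (-1 : ℝ) ^ i * mhsn r i * mhn N (k - i)

theorem alternatingMhsnConv_zero_right (r N : ℕ) : alternatingMhsnConv r N 0 = 1 := by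
  simp [alternatingMhsnConv, mhsn, mhn]

theorem alternatingMhsnConv_zero_left (N k : ℕ) : alternatingMhsnConv 0 N k = mhn N k := by
  simp [alternatingMhsnConv, sum_range_succ', mhsn]

theorem alternatingMhsnConv_succ_succ (r N k : ℕ) :
    alternatingMhsnConv (r + 1) N (k + 1) =
      alternatingMhsnConv r N (k + 1) - ((r + 1 : ℕ) : ℝ)⁻¹ * alternatingMhsnConv (r + 1) N k := by
  simp only [alternatingMhsnConv, sum_range_succ' _ (k + 1), mhsn_succ_succ, mul_sum,
    Nat.add_sub_add_right]
  rw [show mhsn (r + 1) 0 = mhsn r 0 from rfl, add_sub_right_comm, ← sum_sub_distrib]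
  congr 1
  exact sum_congr rfl fun i _ => by ring

theorem alternatingMhsnConv_add_eq_shiftedMhn (r n k : ℕ) :
    alternatingMhsnConv r (n + r) k = shiftedMhn r n k := by
  induction r generalizing n k with
  | zero => rw [Nat.add_zero, alternatingMhsnConv_zero_left, mhn_eq_shiftedMhn_zero]
  | succ r ih =>
    induction k with
    | zero => rw [alternatingMhsnConv_zero_right]; rfl
    | succ k ihk =>
      rw [alternatingMhsnConv_succ_succ, ihk, show n + (r + 1) = n + 1 + r by omega, ih,
        shiftedMhn_succ_succ_eq_shift]
      ring

section Stirling

open Polynomial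

theorem stir1_eq_coeff_ascPochhammer : ∀ m l : ℕ, stir1 m l = (ascPochhammer ℕ m).coeff l
  | 0, 0 => by simp [stir1]
  | 0, l + 1 => by simp [stir1, coeff_one]
  | m + 1, 0 => by simp [stir1, ascPochhammer_succ_left]
  | m + 1, l + 1 => by
    rw [stir1, ascPochhammer_succ_right, mul_add, coeff_add, coeff_mul_X, ← C_eq_natCast,
      coeff_mul_C, stir1_eq_coeff_ascPochhammer m l, stir1_eq_coeff_ascPochhammer m (l + 1),
      mul_comm, Nat.cast_id]

theorem sum_stir1_mul_pow_pred (r n : ℕ) :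
    ∑ l ∈ Icc 1 (r + 1), stir1 (r + 1) l * n ^ (l - 1) = r.factorial * (n + r).choose r := by
  have hcoeff (l : ℕ) : stir1 (r + 1) (l + 1) = ((ascPochhammer ℕ r).comp (X + 1)).coeff l := by
    rw [stir1_eq_coeff_ascPochhammer, ascPochhammer_succ_left, coeff_X_mul]
  have hdeg : ((ascPochhammer ℕ r).comp (X + 1)).natDegree < r + 1 := by
    rw [natDegree_comp, ascPochhammer_natDegree, ← C_1, natDegree_X_add_C]; omega
  rw [← Ico_add_one_right_eq_Icc, sum_Ico_eq_sum_range]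
  simp only [add_tsub_cancel_right, add_comm 1, hcoeff]
  rw [← eval_eq_sum_range' hdeg, eval_comp, ascPochhammer_nat_eq_ascFactorial]
  simp [Nat.ascFactorial_eq_factorial_mul_choose]

end Stirling

theorem gh_succ_eq_choose_mul_shiftedMhn (r n k : ℕ) :
    gh n (r + 1) k = (n + r).choose r * shiftedMhn r n k := by
  rcases k with _ | k
  · simp [gh, shiftedMhn, Nat.add_comm n r]
  · simp only [gh, Nat.add_one_ne_zero, if_false, Nat.add_sub_cancel]
    exact hypAux_succ_eq_choose_mul_shiftedMhn r n k

theorem gh_explicit_formula_general (r k n : ℕ) :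
    gh n (r + 1) k =
      (1 / (Nat.factorial r : ℝ)) *
        ∑ l ∈ Finset.Icc 1 (r + 1), (stir1 (r + 1) l : ℝ) * (n : ℝ) ^ (l - 1) *
          ∑ i ∈ Finset.range (k + 1), (-1 : ℝ) ^ i * mhsn r i * mhn (n + r) (k - i) := by
  have hstirling : ∑ l ∈ Icc 1 (r + 1), (stir1 (r + 1) l : ℝ) * (n : ℝ) ^ (l - 1) =
      Nat.factorial r * (n + r).choose r := by
    exact_mod_cast sum_stir1_mul_pow_pred r n
  rw [← sum_mul, hstirling, ← alternatingMhsnConv, alternatingMhsnConv_add_eq_shiftedMhn,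
    gh_succ_eq_choose_mul_shiftedMhn]
  field_simp

/-- formula (3.2): for `r ≥ 0`, `k, n ≥ 1`,
`h_n^{(r+1)}(k) = (1/r!) ∑_{l=1}^{r+1} [r+1; l] n^{l-1} ∑_{i+j=k} (-1)^i ζ_r^⋆({1}_i) ζ_{n+r}({1}_j)`. -/
theorem gh_explicit_formula (r k n : ℕ) (hk : 1 ≤ k) (hn : 1 ≤ n) :
    gh n (r + 1) k =
      (1 / (Nat.factorial r : ℝ)) *
        ∑ l ∈ Finset.Icc 1 (r + 1), (stir1 (r + 1) l : ℝ) * (n : ℝ) ^ (l - 1) *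
          ∑ i ∈ Finset.range (k + 1), (-1 : ℝ) ^ i * mhsn r i * mhn (n + r) (k - i) :=
  gh_explicit_formula_general r k n
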